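/- arXiv:2511.02660 — 3 statements merged into one kernel-verified Lean document; each statement's English description precedes it below -/
import Mathlib

section
/- For the Marčenko–Pastur law with ratio index y ∈ (0,1) and scale index σ² = 1, whose density is p(x) = (1/(2πxy))√((b−x)(x−a)) on [a,b] with a = (1−√y)², b = (1+√y)², the integral of g(x) = x − log(x) − 1 against this law equals 1 + ((1−y)/y)·log(1−y). -/
/-!
Put `s = √y` and substitute `x = |e^{iθ} - s|² = 1 - 2 s cos θ + s²`, `θ ∈ [0, π]`: the
Marčenko–Pastur law becomes `(2/π) sin²θ / x dθ`, and `x · (sin²θ / x) = sin²θ`, so everything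
reduces to `∫ log x · sin²θ / x dθ`. The identity `4 s² sin²θ / x = 1 + s² + 2 s cos θ - (1 - s²)²/x`
splits this into `∫ log x dθ = 0` (the mean of `log |z - s|` over the unit circle),
`∫ cos θ log x dθ` (integration by parts) and `∫ log x / x dθ`. The last one is computed by
reparametrizing the circle through the disc automorphism `z ↦ (z - s) / (1 - s z)`: its angle `φ`
satisfies `dφ = (1 - s²) / x dθ` and `x · |e^{iφ} + s|² = (1 - s²)²`, which turns `log x / x dθ`
into `(2 log (1 - s²) - log |e^{iφ} + s|²) dφ / (1 - s²)`.
-/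

open Real MeasureTheory intervalIntegral

/-- Density of the Marčenko–Pastur law with ratio index `y` and scale index 1. -/
noncomputable def mpDensity (y x : ℝ) : ℝ :=
  (1 / (2 * Real.pi * x * y)) *
    Real.sqrt (((1 + Real.sqrt y) ^ 2 - x) * (x - (1 - Real.sqrt y) ^ 2))

noncomputable def chordSq (s θ : ℝ) : ℝ := 1 - 2 * s * cos θ + s ^ 2

/-- The argument of `(e^{iθ} - s) / (1 - s e^{iθ})`. -/
noncomputable def mobiusAngle (s θ : ℝ) : ℝ := θ + 2 * arctan (s * sin θ / (1 - s * cos θ))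

section

variable {s : ℝ}

theorem chordSq_eq_sq_add_sq (s θ : ℝ) :
    chordSq s θ = (1 - s * cos θ) ^ 2 + (s * sin θ) ^ 2 := by
  unfold chordSq
  linear_combination (-s ^ 2) * sin_sq_add_cos_sq θ

theorem chordSq_eq_norm_sq (s θ : ℝ) : chordSq s θ = ‖circleMap 0 1 θ - s‖ ^ 2 := by
  rw [chordSq_eq_sq_add_sq, circleMap_zero, Complex.sq_norm, Complex.normSq_apply]
  simp only [Complex.ofReal_one, one_mul, Complex.sub_re, Complex.exp_ofReal_mul_I_re,
    Complex.ofReal_re, Complex.sub_im, Complex.exp_ofReal_mul_I_im, Complex.ofReal_im, sub_zero]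
  linear_combination (s ^ 2 - 1) * sin_sq_add_cos_sq θ

theorem one_sub_mul_cos_pos (hs : |s| < 1) (θ : ℝ) : 0 < 1 - s * cos θ := by
  have : s * cos θ ≤ |s| :=
    calc s * cos θ ≤ |s * cos θ| := le_abs_self _
      _ ≤ |s| := by
        rw [abs_mul]
        exact mul_le_of_le_one_right (abs_nonneg s) (abs_cos_le_one θ)
  linarith

theorem chordSq_pos (hs : |s| < 1) (θ : ℝ) : 0 < chordSq s θ := by
  have := one_sub_mul_cos_pos hs θ
  rw [chordSq_eq_sq_add_sq]
  positivity

theorem chordSq_zero (s : ℝ) : chordSq s 0 = (1 - s) ^ 2 := by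
  simp only [chordSq, cos_zero]
  ring

theorem chordSq_pi (s : ℝ) : chordSq s π = (1 + s) ^ 2 := by
  simp only [chordSq, cos_pi]
  ring

theorem chordSq_mem_Icc (hs : 0 ≤ s) (θ : ℝ) :
    chordSq s θ ∈ Set.Icc ((1 - s) ^ 2) ((1 + s) ^ 2) := by
  unfold chordSq
  constructor <;> nlinarith [neg_one_le_cos θ, cos_le_one θ]

@[fun_prop]
theorem continuous_chordSq (s : ℝ) : Continuous (chordSq s) := by
  unfold chordSq
  fun_prop

theorem continuous_inv_chordSq (hs : |s| < 1) : Continuous fun θ => (chordSq s θ)⁻¹ :=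
  (continuous_chordSq s).inv₀ fun θ => (chordSq_pos hs θ).ne'

theorem continuous_log_chordSq (hs : |s| < 1) : Continuous fun θ => log (chordSq s θ) :=
  (continuous_chordSq s).log fun θ => (chordSq_pos hs θ).ne'

theorem hasDerivAt_chordSq (s θ : ℝ) : HasDerivAt (chordSq s) (2 * s * sin θ) θ := by
  unfold chordSq
  rw [show 2 * s * sin θ = -(2 * s * -sin θ) by ring]
  exact (((hasDerivAt_cos θ).const_mul (2 * s)).const_sub 1).add_const (s ^ 2)

theorem integral_log_chordSq (hs : |s| < 1) : ∫ θ in 0..π, log (chordSq s θ) = 0 := by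
  have hmean := circleAverage_log_norm_sub_const₀ (a := (s : ℂ)) (by simpa using hs)
  rw [circleAverage_def, smul_eq_mul, mul_eq_zero, inv_eq_zero] at hmean
  have hfull : ∫ θ in 0..2 * π, log (chordSq s θ) = 0 := by
    simp_rw [chordSq_eq_norm_sq, log_pow, intervalIntegral.integral_const_mul,
      hmean.resolve_left (by positivity), mul_zero]
  have hsymm : ∫ θ in π..2 * π, log (chordSq s θ) = ∫ θ in 0..π, log (chordSq s θ) := by
    have := integral_comp_sub_left (a := 0) (b := π) (fun θ => log (chordSq s θ)) (2 * π)
    simp only [chordSq, cos_two_pi_sub, sub_zero] at this ⊢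
    rw [this]
    ring_nf
  have hint := (continuous_log_chordSq hs).intervalIntegrable (μ := volume)
  rw [← integral_add_adjacent_intervals (hint 0 π) (hint π (2 * π)), hsymm] at hfull
  linarith

theorem mobiusAngle_zero (s : ℝ) : mobiusAngle s 0 = 0 := by simp [mobiusAngle]

theorem mobiusAngle_pi (s : ℝ) : mobiusAngle s π = π := by simp [mobiusAngle]

theorem hasDerivAt_mobiusAngle (hs : |s| < 1) (θ : ℝ) :
    HasDerivAt (mobiusAngle s) ((1 - s ^ 2) / chordSq s θ) θ := by
  have hk := (one_sub_mul_cos_pos hs θ).ne'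
  have hu : HasDerivAt (fun θ => s * sin θ / (1 - s * cos θ))
      ((s * cos θ * (1 - s * cos θ) - s * sin θ * (s * sin θ)) / (1 - s * cos θ) ^ 2) θ := by
    refine (((hasDerivAt_sin θ).const_mul s).div
      (((hasDerivAt_cos θ).const_mul s).const_sub 1) hk).congr_deriv ?_
    ring
  refine ((hasDerivAt_id θ).add (hu.arctan.const_mul 2)).congr_deriv ?_
  rw [chordSq_eq_sq_add_sq]
  field_simp
  linear_combination (-s ^ 2) * sin_sq_add_cos_sq θ

theorem chordSq_mul_chordSq_neg_mobiusAngle (hs : |s| < 1) (θ : ℝ) :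
    chordSq s θ * chordSq (-s) (mobiusAngle s θ) = (1 - s ^ 2) ^ 2 := by
  set u := s * sin θ / (1 - s * cos θ) with hu
  have hk := (one_sub_mul_cos_pos hs θ).ne'
  have hS : sin (arctan u) = u * cos (arctan u) := by rw [sin_arctan, cos_arctan]; ring
  have hcos : cos (mobiusAngle s θ) = cos θ * (2 * cos (arctan u) ^ 2 - 1)
      - sin θ * (2 * u * cos (arctan u) ^ 2) := by
    rw [mobiusAngle, cos_add, cos_two_mul, sin_two_mul, hS]
    ring
  rw [chordSq, chordSq, hcos, cos_sq_arctan, hu]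
  field_simp
  linear_combination
    (-(4 * s ^ 2 - 8 * s ^ 3 * cos θ + 4 * s ^ 4 * cos θ ^ 2)) * sin_sq_add_cos_sq θ

theorem integral_comp_mobiusAngle (hs : |s| < 1) {g : ℝ → ℝ} (hg : Continuous g) :
    ∫ θ in 0..π, g (mobiusAngle s θ) * ((1 - s ^ 2) / chordSq s θ) = ∫ φ in 0..π, g φ := by
  have h := integral_comp_mul_deriv (a := 0) (b := π) (fun θ _ => hasDerivAt_mobiusAngle hs θ)
    (continuous_const.mul (continuous_inv_chordSq hs)).continuousOn hg
  rwa [mobiusAngle_zero, mobiusAngle_pi] at h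

theorem integral_inv_chordSq (hs : |s| < 1) :
    ∫ θ in 0..π, (chordSq s θ)⁻¹ = π / (1 - s ^ 2) := by
  have hs2 : 1 - s ^ 2 ≠ 0 := by nlinarith [sq_abs s, abs_nonneg s]
  have h := integral_comp_mobiusAngle hs continuous_const (g := fun _ => (1 : ℝ))
  simp only [one_mul, div_eq_mul_inv, intervalIntegral.integral_const_mul, integral_one,
    sub_zero] at h
  rw [eq_div_iff hs2]
  linarith

theorem integral_log_chordSq_div_chordSq (hs : |s| < 1) :
    ∫ θ in 0..π, log (chordSq s θ) / chordSq s θ = 2 * π * log (1 - s ^ 2) / (1 - s ^ 2) := by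
  have hs2 : 0 < 1 - s ^ 2 := by nlinarith [sq_abs s, abs_nonneg s]
  have hs' : |-s| < 1 := by rwa [abs_neg]
  have h := integral_comp_mobiusAngle hs (continuous_log_chordSq hs')
  rw [integral_log_chordSq hs'] at h
  have hlog : ∀ θ, log (chordSq (-s) (mobiusAngle s θ)) * ((1 - s ^ 2) / chordSq s θ)
      = (2 * (1 - s ^ 2) * log (1 - s ^ 2)) * (chordSq s θ)⁻¹
        - (1 - s ^ 2) * (log (chordSq s θ) / chordSq s θ) := by
    intro θ
    have hx := (chordSq_pos hs θ).ne'
    have hφ : chordSq (-s) (mobiusAngle s θ) = (1 - s ^ 2) ^ 2 / chordSq s θ := by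
      rw [eq_div_iff hx, mul_comm]
      exact chordSq_mul_chordSq_neg_mobiusAngle hs θ
    rw [hφ, log_div (by positivity) hx, log_pow]
    field_simp
    push_cast
    ring
  simp_rw [hlog] at h
  have hc₁ := continuous_inv_chordSq hs
  have hc₂ := continuous_log_chordSq hs
  rw [intervalIntegral.integral_sub, intervalIntegral.integral_const_mul,
    intervalIntegral.integral_const_mul, integral_inv_chordSq hs] at h
  · field_simp at h ⊢
    linarith
  all_goals apply Continuous.intervalIntegrable
  · fun_prop
  · simp_rw [div_eq_mul_inv]
    fun_prop

theorem mul_sin_sq_div_chordSq (hs : |s| < 1) (θ : ℝ) :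
    4 * s ^ 2 * (sin θ ^ 2 / chordSq s θ)
      = 1 + s ^ 2 + 2 * s * cos θ - (1 - s ^ 2) ^ 2 * (chordSq s θ)⁻¹ := by
  have hx := (chordSq_pos hs θ).ne'
  field_simp
  unfold chordSq
  linear_combination (4 * s ^ 2) * sin_sq_add_cos_sq θ

theorem integral_mul_sin_sq_div_chordSq (hs : |s| < 1) {f : ℝ → ℝ} (hf : Continuous f) :
    4 * s ^ 2 * ∫ θ in 0..π, f θ * (sin θ ^ 2 / chordSq s θ)
      = (1 + s ^ 2) * (∫ θ in 0..π, f θ) + 2 * s * (∫ θ in 0..π, f θ * cos θ)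
        - (1 - s ^ 2) ^ 2 * ∫ θ in 0..π, f θ * (chordSq s θ)⁻¹ := by
  have hc := continuous_inv_chordSq hs
  rw [← intervalIntegral.integral_const_mul, ← intervalIntegral.integral_const_mul,
    ← intervalIntegral.integral_const_mul, ← intervalIntegral.integral_const_mul,
    ← intervalIntegral.integral_add, ← intervalIntegral.integral_sub]
  · refine intervalIntegral.integral_congr fun θ _ => ?_
    linear_combination f θ * mul_sin_sq_div_chordSq hs θ
  all_goals
    apply Continuous.intervalIntegrable
    fun_prop

theorem integral_sin_sq_div_chordSq (hs0 : s ≠ 0) (hs : |s| < 1) :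
    ∫ θ in 0..π, sin θ ^ 2 / chordSq s θ = π / 2 := by
  have h := integral_mul_sin_sq_div_chordSq hs (f := fun _ => 1) continuous_const
  simp only [one_mul, integral_one, integral_cos, sin_pi, sin_zero, integral_inv_chordSq hs] at h
  apply mul_left_cancel₀ (by positivity : 4 * s ^ 2 ≠ 0)
  rw [h]
  field_simp
  ring

theorem integral_log_chordSq_mul_cos (hs0 : s ≠ 0) (hs : |s| < 1) :
    ∫ θ in 0..π, log (chordSq s θ) * cos θ = -(π * s) := by
  have hx := fun θ => (chordSq_pos hs θ).ne'
  have hu : ∀ θ ∈ Set.uIcc 0 π,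
      HasDerivAt (fun θ => log (chordSq s θ)) (2 * s * sin θ / chordSq s θ) θ :=
    fun θ _ => (hasDerivAt_chordSq s θ).log (hx θ)
  rw [integral_mul_deriv_eq_deriv_mul hu (fun θ _ => hasDerivAt_sin θ)
    ((by fun_prop : Continuous fun θ => 2 * s * sin θ).div (continuous_chordSq s) hx
      |>.intervalIntegrable _ _) (continuous_cos.intervalIntegrable _ _)]
  have : ∀ θ, 2 * s * sin θ / chordSq s θ * sin θ = 2 * s * (sin θ ^ 2 / chordSq s θ) := by
    intro θ
    ring
  simp only [this, intervalIntegral.integral_const_mul, integral_sin_sq_div_chordSq hs0 hs,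
    sin_pi, sin_zero]
  ring

theorem integral_log_chordSq_mul_sin_sq_div_chordSq (hs0 : s ≠ 0) (hs : |s| < 1) :
    ∫ θ in 0..π, log (chordSq s θ) * (sin θ ^ 2 / chordSq s θ)
      = -(π / 2) * (1 + (1 - s ^ 2) / s ^ 2 * log (1 - s ^ 2)) := by
  have h := integral_mul_sin_sq_div_chordSq hs (continuous_log_chordSq hs)
  simp only [← div_eq_mul_inv, integral_log_chordSq hs, integral_log_chordSq_mul_cos hs0 hs,
    integral_log_chordSq_div_chordSq hs] at h
  apply mul_left_cancel₀ (by positivity : 4 * s ^ 2 ≠ 0)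
  rw [h]
  field_simp
  ring

theorem mpDensity_chordSq_mul (hs0 : 0 < s) (hs1 : s < 1) {θ : ℝ} (hθ : 0 ≤ sin θ) :
    mpDensity (s ^ 2) (chordSq s θ) * (2 * s * sin θ) = 2 / π * (sin θ ^ 2 / chordSq s θ) := by
  have hx := (chordSq_pos (abs_lt.2 ⟨by linarith, hs1⟩) θ).ne'
  have hroot : ((1 + s) ^ 2 - chordSq s θ) * (chordSq s θ - (1 - s) ^ 2) = (2 * s * sin θ) ^ 2 := by
    unfold chordSq
    linear_combination (-4 * s ^ 2) * sin_sq_add_cos_sq θ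
  rw [mpDensity, sqrt_sq hs0.le, hroot, sqrt_sq (by positivity)]
  field_simp

theorem integral_mul_mpDensity (hs0 : 0 < s) (hs1 : s < 1) {f : ℝ → ℝ}
    (hf : ContinuousOn f (Set.Icc ((1 - s) ^ 2) ((1 + s) ^ 2))) :
    ∫ x in (1 - s) ^ 2..(1 + s) ^ 2, f x * mpDensity (s ^ 2) x
      = 2 / π * ∫ θ in 0..π, f (chordSq s θ) * (sin θ ^ 2 / chordSq s θ) := by
  have ha : 0 < (1 - s) ^ 2 := by nlinarith
  have hdens : ContinuousOn (mpDensity (s ^ 2)) (Set.Icc ((1 - s) ^ 2) ((1 + s) ^ 2)) := by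
    unfold mpDensity
    refine ContinuousOn.mul (continuousOn_const.div (by fun_prop) fun x hx => ?_) (by fun_prop)
    have := ha.trans_le hx.1
    positivity
  rw [← chordSq_zero, ← chordSq_pi,
    ← integral_comp_mul_deriv' (g := fun x => f x * mpDensity (s ^ 2) x)
      (fun θ _ => hasDerivAt_chordSq s θ) (by fun_prop) ((hf.mul hdens).mono ?_),
    ← intervalIntegral.integral_const_mul]
  · refine intervalIntegral.integral_congr fun θ hθ => ?_
    rw [Set.uIcc_of_le pi_pos.le] at hθ
    simp only [Function.comp_apply]
    rw [mul_assoc, mpDensity_chordSq_mul hs0 hs1 (sin_nonneg_of_nonneg_of_le_pi hθ.1 hθ.2)]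
    ring
  · rintro _ ⟨θ, -, rfl⟩
    exact chordSq_mem_Icc hs0.le θ

end

/-- The integral of `g(x) = x - log x - 1` against the Marčenko–Pastur law with ratio
index `y ∈ (0,1)` and scale 1 equals `1 + ((1-y)/y) * log (1-y)`. -/
theorem mp_integral_g (y : ℝ) (hy : y ∈ Set.Ioo (0 : ℝ) 1) :
    (∫ x in ((1 - Real.sqrt y) ^ 2)..((1 + Real.sqrt y) ^ 2),
        (x - Real.log x - 1) * mpDensity y x)
      = 1 + ((1 - y) / y) * Real.log (1 - y) := by
  obtain ⟨hy0, hy1⟩ := hy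
  set s := √y
  have hsy : s ^ 2 = y := sq_sqrt hy0.le
  have hs0 : 0 < s := sqrt_pos.2 hy0
  have hs1 : s < 1 := (sqrt_lt' one_pos).2 (by linarith)
  have hs : |s| < 1 := abs_lt.2 ⟨by linarith, hs1⟩
  have ha : 0 < (1 - s) ^ 2 := by nlinarith
  have hg : ContinuousOn (fun x => x - log x - 1) (Set.Icc ((1 - s) ^ 2) ((1 + s) ^ 2)) :=
    (continuousOn_id.sub (continuousOn_log.mono fun x hx => (ha.trans_le hx.1).ne')).sub
      continuousOn_const
  have hsplit : ∀ θ ∈ Set.uIcc 0 π,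
      (chordSq s θ - log (chordSq s θ) - 1) * (sin θ ^ 2 / chordSq s θ)
        = sin θ ^ 2 - log (chordSq s θ) * (sin θ ^ 2 / chordSq s θ) - sin θ ^ 2 / chordSq s θ := by
    intro θ _
    have := (chordSq_pos hs θ).ne'
    field_simp
  rw [← hsy, integral_mul_mpDensity hs0 hs1 hg, intervalIntegral.integral_congr hsplit,
    intervalIntegral.integral_sub, intervalIntegral.integral_sub, integral_sin_sq,
    integral_log_chordSq_mul_sin_sq_div_chordSq hs0.ne' hs, integral_sin_sq_div_chordSq hs0.ne' hs]
  · simp only [sin_zero, sin_pi]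
    field_simp
    ring
  all_goals
    apply Continuous.intervalIntegrable
    fun_prop (disch := exact fun θ => (chordSq_pos hs θ).ne')
end

section
/- Let A and B be p×p real symmetric positive semidefinite matrices with eigenvalues λ₁(A) ≥ … ≥ λ_p(A) and λ₁(B) ≥ … ≥ λ_p(B). If f : ℝ → ℝ is Lipschitz with constant C on an interval containing all eigenvalues of A and B, then |∑_{i=1}^p (f(λ_i(A)) − f(λ_i(B)))| ≤ C · √(2p·(λ_max(A)+λ_max(B))) · √(∑_{i=1}^p (√λ_i(A) − √λ_i(B))²). -/
/-!
Writing `λᵢ(A) - λᵢ(B) = (√λᵢ(A) + √λᵢ(B)) (√λᵢ(A) - √λᵢ(B))`, the Lipschitz bound reduces the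
left-hand side to `C ∑ (√λᵢ(A) + √λᵢ(B)) |√λᵢ(A) - √λᵢ(B)|`. Cauchy–Schwarz then separates the
two factors, and each weight satisfies `(√λᵢ(A) + √λᵢ(B))² ≤ 2 (λᵢ(A) + λᵢ(B)) ≤ 2 (λ₁(A) + λ₁(B))`.
-/

open Real Matrix Finset

lemma abs_sum_sub_le_mul_sum_abs_sub {ι : Type*} [Fintype ι] {I : Set ℝ} {f : ℝ → ℝ} {C : ℝ}
    (hf : ∀ x ∈ I, ∀ y ∈ I, |f x - f y| ≤ C * |x - y|) {x y : ι → ℝ}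
    (hx : ∀ i, x i ∈ I) (hy : ∀ i, y i ∈ I) :
    |∑ i, (f (x i) - f (y i))| ≤ C * ∑ i, |x i - y i| :=
  calc |∑ i, (f (x i) - f (y i))|
      ≤ ∑ i, |f (x i) - f (y i)| := abs_sum_le_sum_abs _ _
    _ ≤ ∑ i, C * |x i - y i| := sum_le_sum fun i _ => hf _ (hx i) _ (hy i)
    _ = C * ∑ i, |x i - y i| := (mul_sum _ _ _).symm

lemma abs_sub_eq_sqrt_add_mul_abs_sqrt_sub {x y : ℝ} (hx : 0 ≤ x) (hy : 0 ≤ y) :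
    |x - y| = (√x + √y) * |√x - √y| := by
  have hxy : x - y = (√x + √y) * (√x - √y) := by
    rw [← mul_self_sub_mul_self, mul_self_sqrt hx, mul_self_sqrt hy]
  rw [hxy, abs_mul, abs_of_nonneg (by positivity)]

lemma sum_mul_le_sqrt_card_mul_mul_sqrt_sum_sq {ι : Type*} [Fintype ι] {u : ι → ℝ} {M : ℝ}
    (hu : ∀ i, u i ^ 2 ≤ M) (v : ι → ℝ) :
    ∑ i, u i * v i ≤ √(Fintype.card ι * M) * √(∑ i, v i ^ 2) := by
  have hsum : ∑ i, u i ^ 2 ≤ Fintype.card ι * M := by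
    simpa using sum_le_card_nsmul univ (fun i => u i ^ 2) M fun i _ => hu i
  exact (sum_mul_le_sqrt_mul_sqrt univ u v).trans <|
    mul_le_mul_of_nonneg_right (sqrt_le_sqrt hsum) (sqrt_nonneg _)

lemma sum_abs_sub_le_sqrt_mul_sqrt_sum_sq_sqrt_sub {ι : Type*} [Fintype ι] {x y : ι → ℝ}
    {X Y : ℝ} (hx₀ : ∀ i, 0 ≤ x i) (hy₀ : ∀ i, 0 ≤ y i) (hX : ∀ i, x i ≤ X) (hY : ∀ i, y i ≤ Y) :
    ∑ i, |x i - y i| ≤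
      √(2 * Fintype.card ι * (X + Y)) * √(∑ i, (√(x i) - √(y i)) ^ 2) := by
  have hweight : ∀ i, (√(x i) + √(y i)) ^ 2 ≤ 2 * (X + Y) := fun i =>
    calc (√(x i) + √(y i)) ^ 2
        ≤ 2 * (√(x i) ^ 2 + √(y i) ^ 2) := add_sq_le
      _ = 2 * (x i + y i) := by rw [sq_sqrt (hx₀ i), sq_sqrt (hy₀ i)]
      _ ≤ 2 * (X + Y) := by linarith [hX i, hY i]
  calc ∑ i, |x i - y i|
      = ∑ i, (√(x i) + √(y i)) * |√(x i) - √(y i)| :=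
        sum_congr rfl fun i _ => abs_sub_eq_sqrt_add_mul_abs_sqrt_sub (hx₀ i) (hy₀ i)
    _ ≤ √(Fintype.card ι * (2 * (X + Y))) * √(∑ i, |√(x i) - √(y i)| ^ 2) :=
        sum_mul_le_sqrt_card_mul_mul_sqrt_sum_sq hweight _
    _ = √(2 * Fintype.card ι * (X + Y)) * √(∑ i, (√(x i) - √(y i)) ^ 2) := by
        simp only [sq_abs, mul_left_comm, mul_assoc]

theorem lipschitz_eigenvalue_sum_bound_general (p : ℕ) (hp : 0 < p)
    (A B : Matrix (Fin p) (Fin p) ℝ) (hA : A.PosSemidef) (hB : B.PosSemidef)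
    (lamA lamB : Fin p → ℝ)
    (hlamA : ∃ e : Equiv.Perm (Fin p), lamA = hA.1.eigenvalues ∘ e)
    (hlamB : ∃ e : Equiv.Perm (Fin p), lamB = hB.1.eigenvalues ∘ e)
    (hmonoA : Antitone lamA) (hmonoB : Antitone lamB)
    (I : Set ℝ)
    (hI : ∀ i, lamA i ∈ I ∧ lamB i ∈ I)
    (f : ℝ → ℝ) (C : ℝ) (hC : 0 ≤ C)
    (hf : ∀ x ∈ I, ∀ y ∈ I, |f x - f y| ≤ C * |x - y|) :
    |∑ i, (f (lamA i) - f (lamB i))| ≤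
      C * Real.sqrt (2 * p * (lamA ⟨0, hp⟩ + lamB ⟨0, hp⟩)) *
        Real.sqrt (∑ i, (Real.sqrt (lamA i) - Real.sqrt (lamB i)) ^ 2) := by
  obtain ⟨eA, rfl⟩ := hlamA
  obtain ⟨eB, rfl⟩ := hlamB
  have hmax : ∀ i : Fin p, (⟨0, hp⟩ : Fin p) ≤ i := fun _ => Fin.mk_le_of_le_val (Nat.zero_le _)
  have hsqrt := sum_abs_sub_le_sqrt_mul_sqrt_sum_sq_sqrt_sub
    (fun _ => hA.eigenvalues_nonneg _) (fun _ => hB.eigenvalues_nonneg _)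
    (fun i => hmonoA (hmax i)) (fun i => hmonoB (hmax i))
  rw [Fintype.card_fin] at hsqrt
  calc |∑ i, (f ((hA.1.eigenvalues ∘ eA) i) - f ((hB.1.eigenvalues ∘ eB) i))|
      ≤ C * ∑ i, |(hA.1.eigenvalues ∘ eA) i - (hB.1.eigenvalues ∘ eB) i| :=
        abs_sum_sub_le_mul_sum_abs_sub hf (fun i => (hI i).1) (fun i => (hI i).2)
    _ ≤ _ := by rw [mul_assoc]; exact mul_le_mul_of_nonneg_left hsqrt hC

/-- Lipschitz eigenvalue-sum bound: for symmetric PSD matrices `A`, `B` with eigenvalues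
listed in decreasing order and a function `f` Lipschitz with constant `C` on an interval
containing all eigenvalues,
`|∑ (f(λᵢ(A)) - f(λᵢ(B)))| ≤ C √(2p(λmax(A)+λmax(B))) √(∑ (√λᵢ(A) - √λᵢ(B))²)`. -/
theorem lipschitz_eigenvalue_sum_bound (p : ℕ) (hp : 0 < p)
    (A B : Matrix (Fin p) (Fin p) ℝ) (hA : A.PosSemidef) (hB : B.PosSemidef)
    (lamA lamB : Fin p → ℝ)
    (hlamA : ∃ e : Equiv.Perm (Fin p), lamA = hA.1.eigenvalues ∘ e)
    (hlamB : ∃ e : Equiv.Perm (Fin p), lamB = hB.1.eigenvalues ∘ e)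
    (hmonoA : Antitone lamA) (hmonoB : Antitone lamB)
    (I : Set ℝ) (hIconn : I.OrdConnected)
    (hI : ∀ i, lamA i ∈ I ∧ lamB i ∈ I)
    (f : ℝ → ℝ) (C : ℝ) (hC : 0 ≤ C)
    (hf : ∀ x ∈ I, ∀ y ∈ I, |f x - f y| ≤ C * |x - y|) :
    |∑ i, (f (lamA i) - f (lamB i))| ≤
      C * Real.sqrt (2 * p * (lamA ⟨0, hp⟩ + lamB ⟨0, hp⟩)) *
        Real.sqrt (∑ i, (Real.sqrt (lamA i) - Real.sqrt (lamB i)) ^ 2) :=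
  lipschitz_eigenvalue_sum_bound_general p hp A B hA hB lamA lamB hlamA hlamB hmonoA hmonoB I hI f C
    hC hf
end

section
/- Let F and G be the empirical spectral distributions of the p×p matrices UUᵀ and VVᵀ, where U, V are p×k real matrices. Then the fourth power of the Lévy distance satisfies L(F,G)⁴ ≤ (2/p²)·tr((U−V)(U−V)ᵀ)·tr(UUᵀ + VVᵀ). -/
/-!
Let `S` be spanned by the eigenvectors of `UUᵀ` with eigenvalue `≤ x` and `T` by those of `VVᵀ`
with eigenvalue `> x + ε`. A unit vector `f ∈ S ⊓ T` has `‖Uᵀf‖² ≤ x < x + ε ≤ ‖Vᵀf‖²`, hence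
`ε ≤ ‖(U - V)ᵀf‖ (‖Uᵀf‖ + ‖Vᵀf‖)`. Summing over an orthonormal basis of `S ⊓ T`, whose dimension is
at least `#{λ(UUᵀ) ≤ x} - #{λ(VVᵀ) ≤ x + ε}`, and bounding the sum by Cauchy–Schwarz and Bessel's
inequality gives `ε (#{λ(UUᵀ) ≤ x} - #{λ(VVᵀ) ≤ x + ε}) ≤ √(2 tr((U-V)(U-V)ᵀ) tr(UUᵀ + VVᵀ))`.
Once `ε⁴` exceeds the right-hand side of the bound, the eigenvalue counts therefore differ by at
most `pε`, which is the Lévy condition at `ε`.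
-/

open Real Matrix

/-- Lévy distance between two distribution functions. -/
noncomputable def levyDist (F G : ℝ → ℝ) : ℝ :=
  sInf {ε : ℝ | 0 < ε ∧ ∀ x, F (x - ε) - ε ≤ G x ∧ G x ≤ F (x + ε) + ε}

/-- Empirical spectral distribution function of a list of `p` eigenvalues. -/
noncomputable def esd {p : ℕ} (lam : Fin p → ℝ) : ℝ → ℝ := fun x =>
  (1 / (p : ℝ)) * (Finset.univ.filter fun i => lam i ≤ x).card


open Finset Module Submodule
open scoped RealInnerProductSpace InnerProductSpace

theorem Submodule.finrank_add_finrank_le_finrank_add_finrank_inf {K V : Type*} [DivisionRing K]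
    [AddCommGroup V] [Module K V] [FiniteDimensional K V] (s t : Submodule K V) :
    finrank K s + finrank K t ≤ finrank K V + finrank K ↥(s ⊓ t) := by
  rw [← finrank_sup_add_finrank_inf_eq]
  exact Nat.add_le_add_right (finrank_le _) _

theorem norm_sq_sub_norm_sq_le {E : Type*} [SeminormedAddCommGroup E] (a b : E) :
    ‖b‖ ^ 2 - ‖a‖ ^ 2 ≤ ‖b - a‖ * (‖a‖ + ‖b‖) :=
  calc ‖b‖ ^ 2 - ‖a‖ ^ 2 = (‖b‖ - ‖a‖) * (‖a‖ + ‖b‖) := by ring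
    _ ≤ ‖b - a‖ * (‖a‖ + ‖b‖) := by gcongr; exact norm_sub_norm_le b a

theorem levyDist_nonneg (F G : ℝ → ℝ) : 0 ≤ levyDist F G :=
  Real.sInf_nonneg fun _ hε => hε.1.le

theorem levyDist_le {F G : ℝ → ℝ} {δ : ℝ} (hδ : 0 ≤ δ)
    (h : ∀ ε, δ < ε → ∀ x, F (x - ε) - ε ≤ G x ∧ G x ≤ F (x + ε) + ε) :
    levyDist F G ≤ δ :=
  le_of_forall_gt_imp_ge_of_dense fun ε hε =>
    csInf_le ⟨0, fun _ hε' => hε'.1.le⟩ ⟨hδ.trans_lt hε, h ε hε⟩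

theorem esd_le_esd_add {p : ℕ} (lam mu : Fin p → ℝ) {y z ε : ℝ} (hε : 0 ≤ ε)
    (h : (#{i | lam i ≤ y} : ℝ) ≤ #{i | mu i ≤ z} + p * ε) :
    esd lam y ≤ esd mu z + ε := by
  rcases Nat.eq_zero_or_pos p with rfl | hp
  · simpa [esd] using hε
  · have hp : (0 : ℝ) < p := Nat.cast_pos.2 hp
    simp only [esd, one_div]
    rw [inv_mul_le_iff₀ hp, mul_add, mul_inv_cancel_left₀ hp.ne']
    linarith

theorem levyDist_esd_le {p : ℕ} (lam mu : Fin p → ℝ) {δ : ℝ} (hδ : 0 ≤ δ)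
    (h : ∀ ε, δ < ε → ∀ x, (#{i | lam i ≤ x} : ℝ) ≤ #{i | mu i ≤ x + ε} + p * ε ∧
      (#{i | mu i ≤ x} : ℝ) ≤ #{i | lam i ≤ x + ε} + p * ε) :
    levyDist (esd lam) (esd mu) ≤ δ := by
  refine levyDist_le hδ fun ε hε x => ⟨?_, esd_le_esd_add _ _ (hδ.trans hε.le) (h ε hε x).2⟩
  have h' := esd_le_esd_add _ _ (hδ.trans hε.le) (h ε hε (x - ε)).1
  rw [sub_add_cancel] at h'
  linarith

namespace OrthonormalBasis

variable {ι 𝕜 E : Type*} [Fintype ι] [RCLike 𝕜] [NormedAddCommGroup E] [InnerProductSpace 𝕜 E]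
  (e : OrthonormalBasis ι 𝕜 E)

theorem inner_eq_zero_of_mem_span_image {J : Set ι} {i : ι} (hi : i ∉ J) {v : E}
    (hv : v ∈ span 𝕜 (e '' J)) : ⟪e i, v⟫_𝕜 = 0 := by
  rw [← mem_orthogonal_singleton_iff_inner_right]
  refine span_le.2 ?_ hv
  rintro _ ⟨j, hj, rfl⟩
  exact mem_orthogonal_singleton_iff_inner_right.2 (e.orthonormal.2 fun hij => hi (hij ▸ hj))

theorem finrank_span_image_finset (J : Finset ι) : finrank 𝕜 (span 𝕜 (e '' J)) = #J := by
  rw [Set.image_eq_range, ← Fintype.card_coe]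
  exact finrank_span_eq_card (e.orthonormal.linearIndependent.comp _ Subtype.val_injective)

theorem card_add_card_le_card_add_finrank_inf (e' : OrthonormalBasis ι 𝕜 E) (J J' : Finset ι) :
    #J + #J' ≤ Fintype.card ι + finrank 𝕜 ↥(span 𝕜 (e '' J) ⊓ span 𝕜 (e' '' J')) := by
  have : FiniteDimensional 𝕜 E := e.toBasis.finiteDimensional_of_finite
  have h := finrank_add_finrank_le_finrank_add_finrank_inf (span 𝕜 (e '' J)) (span 𝕜 (e' '' J'))
  rwa [e.finrank_span_image_finset, e'.finrank_span_image_finset,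
    finrank_eq_card_basis e.toBasis] at h

end OrthonormalBasis

namespace Matrix

variable {m n : Type*} [Fintype m] [Fintype n]

theorem trace_mul_transpose_self_nonneg (M : Matrix n m ℝ) : 0 ≤ trace (M * Mᵀ) := by
  simpa using (posSemidef_self_mul_conjTranspose M).trace_nonneg

theorem inner_toEuclideanLin_mul_transpose_self [DecidableEq n] [DecidableEq m] (M : Matrix n m ℝ)
    (v : EuclideanSpace ℝ n) :
    ⟪v, toEuclideanLin (M * Mᵀ) v⟫ = ‖toEuclideanLin Mᵀ v‖ ^ 2 := by
  have hM : toEuclideanLin M = LinearMap.adjoint (toEuclideanLin Mᵀ) := by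
    rw [← toEuclideanLin_conjTranspose_eq_adjoint, conjTranspose_eq_transpose_of_trivial,
      transpose_transpose]
  rw [toLpLin_mul, LinearMap.comp_apply, hM, LinearMap.adjoint_inner_right,
    real_inner_self_eq_norm_sq]

theorem sum_norm_toEuclideanLin_transpose_sq_le_trace [DecidableEq n] {ι : Type*} [Fintype ι]
    (M : Matrix n m ℝ) {f : ι → EuclideanSpace ℝ n} (hf : Orthonormal ℝ f) :
    ∑ i, ‖toEuclideanLin Mᵀ (f i)‖ ^ 2 ≤ trace (M * Mᵀ) := by
  have hrow : ∀ v : EuclideanSpace ℝ n, ∀ q,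
      toEuclideanLin Mᵀ v q = ⟪WithLp.toLp 2 (Mᵀ q), v⟫ := fun v q => by
    simp [EuclideanSpace.inner_eq_star_dotProduct, mulVec, dotProduct, mul_comm]
  calc ∑ i, ‖toEuclideanLin Mᵀ (f i)‖ ^ 2
      = ∑ q, ∑ i, ⟪f i, WithLp.toLp 2 (Mᵀ q)⟫ ^ 2 := by
        simp only [EuclideanSpace.real_norm_sq_eq, hrow, real_inner_comm]
        exact Finset.sum_comm
    _ ≤ ∑ q, ‖WithLp.toLp 2 (Mᵀ q)‖ ^ 2 := by
        gcongr with q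
        simpa using hf.sum_inner_products_le (WithLp.toLp 2 (Mᵀ q)) (s := univ)
    _ = trace (M * Mᵀ) := by
        simp only [EuclideanSpace.real_norm_sq_eq]
        simp only [trace, diag, mul_apply, transpose_apply, sq]
        exact Finset.sum_comm

theorem sum_norm_mul_norm_add_norm_le_sqrt_trace [DecidableEq n] {ι : Type*} [Fintype ι]
    (U V : Matrix n m ℝ) {f : ι → EuclideanSpace ℝ n} (hf : Orthonormal ℝ f) :
    ∑ i, ‖toEuclideanLin (U - V)ᵀ (f i)‖ *
        (‖toEuclideanLin Uᵀ (f i)‖ + ‖toEuclideanLin Vᵀ (f i)‖) ≤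
      √(2 * trace ((U - V) * (U - V)ᵀ) * trace (U * Uᵀ + V * Vᵀ)) := by
  have hsum : ∑ i, (‖toEuclideanLin Uᵀ (f i)‖ + ‖toEuclideanLin Vᵀ (f i)‖) ^ 2 ≤
      2 * trace (U * Uᵀ + V * Vᵀ) :=
    calc _ ≤ ∑ i, 2 * (‖toEuclideanLin Uᵀ (f i)‖ ^ 2 + ‖toEuclideanLin Vᵀ (f i)‖ ^ 2) :=
          sum_le_sum fun _ _ => add_sq_le
      _ ≤ 2 * trace (U * Uᵀ + V * Vᵀ) := by
          rw [← mul_sum, sum_add_distrib, trace_add]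
          gcongr <;> exact sum_norm_toEuclideanLin_transpose_sq_le_trace _ hf
  calc _ ≤ √(∑ i, ‖toEuclideanLin (U - V)ᵀ (f i)‖ ^ 2) *
        √(∑ i, (‖toEuclideanLin Uᵀ (f i)‖ + ‖toEuclideanLin Vᵀ (f i)‖) ^ 2) :=
        Real.sum_mul_le_sqrt_mul_sqrt _ _ _
    _ ≤ √(trace ((U - V) * (U - V)ᵀ)) * √(2 * trace (U * Uᵀ + V * Vᵀ)) := by
        gcongr
        exact sum_norm_toEuclideanLin_transpose_sq_le_trace _ hf
    _ = _ := by
        rw [← sqrt_mul (trace_mul_transpose_self_nonneg _), mul_left_comm, mul_assoc]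

end Matrix

namespace Matrix.IsHermitian

variable {n : Type*} [Fintype n] [DecidableEq n] {A : Matrix n n ℝ} (hA : A.IsHermitian)

theorem inner_eigenvectorBasis_toEuclideanLin (i : n) (v : EuclideanSpace ℝ n) :
    ⟪hA.eigenvectorBasis i, toEuclideanLin A v⟫ =
      hA.eigenvalues i * ⟪hA.eigenvectorBasis i, v⟫ := by
  rw [← (isSymmetric_toEuclideanLin_iff.2 hA) _ v]
  have : toEuclideanLin A (hA.eigenvectorBasis i) = hA.eigenvalues i • hA.eigenvectorBasis i := by
    simpa [toLpLin_apply] using congr(WithLp.toLp 2 $(hA.mulVec_eigenvectorBasis i))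
  rw [this, real_inner_smul_left]

theorem inner_toEuclideanLin_sub_mul_norm_sq (c : ℝ) (v : EuclideanSpace ℝ n) :
    ⟪v, toEuclideanLin A v⟫ - c * ‖v‖ ^ 2 =
      ∑ i, (hA.eigenvalues i - c) * ⟪hA.eigenvectorBasis i, v⟫ ^ 2 := by
  rw [← hA.eigenvectorBasis.sum_inner_mul_inner, ← hA.eigenvectorBasis.sum_sq_norm_inner_right,
    mul_sum, ← sum_sub_distrib]
  refine sum_congr rfl fun i _ => ?_
  rw [hA.inner_eigenvectorBasis_toEuclideanLin, real_inner_comm, Real.norm_eq_abs, sq_abs]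
  ring

theorem inner_toEuclideanLin_le_of_mem_span {J : Set n} {c : ℝ}
    (hJ : ∀ i ∈ J, hA.eigenvalues i ≤ c) {v : EuclideanSpace ℝ n}
    (hv : v ∈ span ℝ (hA.eigenvectorBasis '' J)) :
    ⟪v, toEuclideanLin A v⟫ ≤ c * ‖v‖ ^ 2 := by
  rw [← sub_nonpos, hA.inner_toEuclideanLin_sub_mul_norm_sq]
  refine sum_nonpos fun i _ => ?_
  by_cases hi : i ∈ J
  · exact mul_nonpos_of_nonpos_of_nonneg (sub_nonpos.2 (hJ i hi)) (sq_nonneg _)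
  · simp [hA.eigenvectorBasis.inner_eq_zero_of_mem_span_image hi hv]

theorem le_inner_toEuclideanLin_of_mem_span {J : Set n} {c : ℝ}
    (hJ : ∀ i ∈ J, c ≤ hA.eigenvalues i) {v : EuclideanSpace ℝ n}
    (hv : v ∈ span ℝ (hA.eigenvectorBasis '' J)) :
    c * ‖v‖ ^ 2 ≤ ⟪v, toEuclideanLin A v⟫ := by
  rw [← sub_nonneg, hA.inner_toEuclideanLin_sub_mul_norm_sq]
  refine sum_nonneg fun i _ => ?_
  by_cases hi : i ∈ J
  · exact mul_nonneg (sub_nonneg.2 (hJ i hi)) (sq_nonneg _)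
  · simp [hA.eigenvectorBasis.inner_eq_zero_of_mem_span_image hi hv]

end Matrix.IsHermitian

namespace Matrix

variable {m n : Type*} [Fintype m] [Fintype n] [DecidableEq n] [DecidableEq m]
  {U V : Matrix n m ℝ} (hA : (U * Uᵀ).IsHermitian) (hB : (V * Vᵀ).IsHermitian)

theorem mul_sub_card_eigenvalues_le_sqrt_trace (x : ℝ) {ε : ℝ} (hε : 0 ≤ ε) :
    ε * ((#{i | hA.eigenvalues i ≤ x} : ℝ) - #{i | hB.eigenvalues i ≤ x + ε}) ≤
      √(2 * trace ((U - V) * (U - V)ᵀ) * trace (U * Uᵀ + V * Vᵀ)) := by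
  set JA : Finset n := {i | hA.eigenvalues i ≤ x}
  set JB : Finset n := {i | ¬ hB.eigenvalues i ≤ x + ε}
  set S := span ℝ (hA.eigenvectorBasis '' JA)
  set T := span ℝ (hB.eigenvectorBasis '' JB)
  have hdim : (#JA : ℝ) - #{i | hB.eigenvalues i ≤ x + ε} ≤ finrank ℝ ↥(S ⊓ T) := by
    have h := hA.eigenvectorBasis.card_add_card_le_card_add_finrank_inf hB.eigenvectorBasis JA JB
    rw [← card_univ, ← univ.card_filter_add_card_filter_not (hB.eigenvalues · ≤ x + ε)] at h
    have h' : (#JA : ℝ) + #JB ≤ #{i | hB.eigenvalues i ≤ x + ε} + #JB + finrank ℝ ↥(S ⊓ T) := by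
      exact_mod_cast h
    linarith
  set b := stdOrthonormalBasis ℝ ↥(S ⊓ T)
  set f := fun i => ((b i : ↥(S ⊓ T)) : EuclideanSpace ℝ n)
  have hf : Orthonormal ℝ f := b.orthonormal.comp_linearIsometry (S ⊓ T).subtypeₗᵢ
  have hgap : ∀ i, ε ≤ ‖toEuclideanLin (U - V)ᵀ (f i)‖ *
      (‖toEuclideanLin Uᵀ (f i)‖ + ‖toEuclideanLin Vᵀ (f i)‖) := fun i => by
    have hS := hA.inner_toEuclideanLin_le_of_mem_span (J := ↑JA) (c := x) (v := f i)
      (by simp [JA]) (mem_inf.1 (b i).2).1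
    have hT := hB.le_inner_toEuclideanLin_of_mem_span (J := ↑JB) (c := x + ε) (v := f i)
      (by simp +contextual [JB, le_of_not_ge]) (mem_inf.1 (b i).2).2
    rw [inner_toEuclideanLin_mul_transpose_self, hf.1 i, one_pow, mul_one] at hS hT
    have h := norm_sq_sub_norm_sq_le (toEuclideanLin Uᵀ (f i)) (toEuclideanLin Vᵀ (f i))
    rw [transpose_sub, map_sub, LinearMap.sub_apply, norm_sub_rev]
    linarith
  calc ε * ((#JA : ℝ) - #{i | hB.eigenvalues i ≤ x + ε})
      ≤ ∑ _i : Fin (finrank ℝ ↥(S ⊓ T)), ε := by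
        rw [sum_const, card_univ, Fintype.card_fin, nsmul_eq_mul, mul_comm]
        gcongr
    _ ≤ _ := sum_le_sum fun i _ => hgap i
    _ ≤ _ := sum_norm_mul_norm_add_norm_le_sqrt_trace U V hf

theorem card_eigenvalues_le_le_card_add (x : ℝ) {ε : ℝ} (hε : 0 < ε)
    (h : 2 * trace ((U - V) * (U - V)ᵀ) * trace (U * Uᵀ + V * Vᵀ) ≤
      (Fintype.card n * ε ^ 2) ^ 2) :
    (#{i | hA.eigenvalues i ≤ x} : ℝ) ≤ #{i | hB.eigenvalues i ≤ x + ε} + Fintype.card n * ε := by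
  have h' := (mul_sub_card_eigenvalues_le_sqrt_trace hA hB x hε.le).trans
    (Real.sqrt_le_left (by positivity) |>.2 h)
  rw [sq, ← mul_assoc, mul_comm _ ε] at h'
  have := le_of_mul_le_mul_left h' hε
  linarith

end Matrix

/-- Bai's Lemma 2.7: for the ESDs `F`, `G` of `UUᵀ` and `VVᵀ`,
`L(F,G)⁴ ≤ (2/p²)·tr((U-V)(U-V)ᵀ)·tr(UUᵀ + VVᵀ)`. -/
theorem levy_distance_fourth_power_bound (p k : ℕ) (U V : Matrix (Fin p) (Fin k) ℝ)
    (hA : (U * Uᵀ).IsHermitian) (hB : (V * Vᵀ).IsHermitian) :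
    (levyDist (esd hA.eigenvalues) (esd hB.eigenvalues)) ^ 4 ≤
      (2 / (p : ℝ) ^ 2) * Matrix.trace ((U - V) * (U - V)ᵀ) *
        Matrix.trace (U * Uᵀ + V * Vᵀ) := by
  set R := (2 / (p : ℝ) ^ 2) * trace ((U - V) * (U - V)ᵀ) * trace (U * Uᵀ + V * Vᵀ)
  have hR : 0 ≤ R := by
    have hD := trace_mul_transpose_self_nonneg (U - V)
    have hS : 0 ≤ trace (U * Uᵀ + V * Vᵀ) := by
      rw [trace_add]
      exact add_nonneg (trace_mul_transpose_self_nonneg U) (trace_mul_transpose_self_nonneg V)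
    positivity
  have hpR : 2 * trace ((U - V) * (U - V)ᵀ) * trace (U * Uᵀ + V * Vᵀ) = p ^ 2 * R := by
    rcases Nat.eq_zero_or_pos p with rfl | hp
    · simp [trace]
    · have : (p : ℝ) ≠ 0 := by positivity
      simp only [R]
      field_simp
  have hswap : 2 * trace ((V - U) * (V - U)ᵀ) * trace (V * Vᵀ + U * Uᵀ) = p ^ 2 * R := by
    rw [← neg_sub U V, transpose_neg, Matrix.neg_mul, Matrix.mul_neg, neg_neg, add_comm, hpR]
  have hδ : √√R ^ 4 = R := by
    rw [show (4 : ℕ) = 2 * 2 from rfl, pow_mul, sq_sqrt (sqrt_nonneg R), sq_sqrt hR]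
  refine (pow_le_pow_left₀ (levyDist_nonneg _ _)
    (levyDist_esd_le _ _ (sqrt_nonneg _) fun ε hε x => ?_) 4).trans hδ.le
  have hε0 : 0 < ε := (sqrt_nonneg _).trans_lt hε
  have hsmall : p ^ 2 * R ≤ (Fintype.card (Fin p) * ε ^ 2) ^ 2 := by
    rw [Fintype.card_fin, mul_pow, ← pow_mul, ← hδ]
    gcongr
  exact ⟨by simpa using card_eigenvalues_le_le_card_add hA hB x hε0 (hpR ▸ hsmall),
    by simpa using card_eigenvalues_le_le_card_add hB hA x hε0 (hswap ▸ hsmall)⟩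
end
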